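/- arXiv:2412.19540 — 3 statements merged into one kernel-verified Lean document; each statement's English description precedes it below -/
import Mathlib

section
/- Every two-dimensional subspace of the two-qubit Hilbert space ℂ² ⊗ ℂ² contains a nonzero product vector, i.e., a vector of the form u ⊗ v with u, v ∈ ℂ². -/
/-!
The product vectors `u ⊗ v` are exactly the vectors whose 2×2 coefficient matrix has vanishing
determinant, and this determinant is a quadratic form on ℂ² ⊗ ℂ². Over an algebraically closed
field a quadratic form has a nonzero zero on any space of dimension at least 2: on the line
`x + z • y` through a vector `y` with `Q y ≠ 0` it is a genuine quadratic polynomial in `z`.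
-/

noncomputable section

/-- The single-qubit Hilbert space ℂ². -/
abbrev E2 := EuclideanSpace ℂ (Fin 2)

/-- The two-qubit Hilbert space ℂ² ⊗ ℂ², realized as EuclideanSpace over Fin 2 × Fin 2. -/
abbrev E4 := EuclideanSpace ℂ (Fin 2 × Fin 2)

/-- Standard basis vector of ℂ². -/
def e (i : Fin 2) : E2 := EuclideanSpace.single i 1

/-- The simple tensor (product vector) u ⊗ v in ℂ² ⊗ ℂ². -/
def tp (u v : E2) : E4 := WithLp.toLp 2 (fun p : Fin 2 × Fin 2 => u p.1 * v p.2)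

/-- The standard basis vector |ij⟩ = e_i ⊗ e_j of ℂ² ⊗ ℂ². -/
def ket (i j : Fin 2) : E4 := tp (e i) (e j)

lemma exists_mul_eq_of_mul_eq_mul {K : Type*} [Field K] {a b c d : K} (h : a * d = b * c) :
    ∃ u₀ u₁ v₀ v₁ : K, u₀ * v₀ = a ∧ u₀ * v₁ = b ∧ u₁ * v₀ = c ∧ u₁ * v₁ = d := by
  by_cases ha : a = 0
  · subst ha
    rcases mul_eq_zero.mp (h.symm.trans (zero_mul d)) with rfl | rfl
    · exact ⟨0, 1, c, d, by simp⟩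
    · exact ⟨b, d, 0, 1, by simp⟩
  · refine ⟨a, c, 1, b / a, mul_one a, mul_div_cancel₀ b ha, mul_one c, ?_⟩
    field_simp
    linear_combination -h

lemma IsAlgClosed.exists_quadratic_eq_zero {K : Type*} [Field K] [IsAlgClosed K] {a : K}
    (ha : a ≠ 0) (b c : K) : ∃ z, a * (z * z) + b * z + c = 0 := by
  open Polynomial in
  obtain ⟨z, hz⟩ := IsAlgClosed.exists_root (C a * X ^ 2 + C b * X + C c)
    (by rw [degree_quadratic ha]; decide)
  exact ⟨z, by simpa [sq] using hz⟩

namespace QuadraticMap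

lemma map_add_smul {R M N : Type*} [CommRing R] [AddCommGroup M] [Module R M] [AddCommGroup N]
    [Module R N] (Q : QuadraticMap R M N) (x y : M) (z : R) :
    Q (x + z • y) = (z * z) • Q y + z • polar Q x y + Q x := by
  rw [QuadraticMap.map_add Q, QuadraticMap.map_smul, polar_smul_right]
  abel

theorem not_anisotropic_of_one_lt_finrank {K M : Type*} [Field K] [IsAlgClosed K]
    [AddCommGroup M] [Module K M] (Q : QuadraticForm K M) (hM : 1 < Module.finrank K M) :
    ¬ Q.Anisotropic := by
  have : Nontrivial M := Module.nontrivial_of_finrank_pos (R := K) (by omega)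
  obtain ⟨y, hy⟩ := exists_ne (0 : M)
  by_cases hQy : Q y = 0
  · exact fun hQ => hy (hQ y hQy)
  obtain ⟨x, hyx⟩ := exists_linearIndependent_pair_of_one_lt_finrank hM hy
  obtain ⟨z, hz⟩ := IsAlgClosed.exists_quadratic_eq_zero hQy (polar Q x y) (Q x)
  intro hQ
  have hxz : z • y + (1 : K) • x = 0 := by
    rw [one_smul, add_comm]
    apply hQ
    rw [map_add_smul, smul_eq_mul, smul_eq_mul]
    linear_combination hz
  exact one_ne_zero (LinearIndependent.pair_iff.mp hyx z 1 hxz).2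

end QuadraticMap

def coeffDet : QuadraticForm ℂ E4 :=
  QuadraticMap.linMulLin (EuclideanSpace.proj (0, 0) : E4 →L[ℂ] ℂ).toLinearMap
      (EuclideanSpace.proj (1, 1) : E4 →L[ℂ] ℂ).toLinearMap -
    QuadraticMap.linMulLin (EuclideanSpace.proj (0, 1) : E4 →L[ℂ] ℂ).toLinearMap
      (EuclideanSpace.proj (1, 0) : E4 →L[ℂ] ℂ).toLinearMap

lemma coeffDet_apply (w : E4) : coeffDet w = w (0, 0) * w (1, 1) - w (0, 1) * w (1, 0) := rfl

lemma exists_tp_eq_of_coeffDet_eq_zero {w : E4} (hw : coeffDet w = 0) :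
    ∃ u v : E2, tp u v = w := by
  obtain ⟨u₀, u₁, v₀, v₁, h₀₀, h₀₁, h₁₀, h₁₁⟩ :=
    exists_mul_eq_of_mul_eq_mul (sub_eq_zero.mp ((coeffDet_apply w).symm.trans hw))
  refine ⟨!₂[u₀, u₁], !₂[v₀, v₁], ?_⟩
  ext p
  fin_cases p <;> simpa [tp]

/-- Every two-dimensional subspace of the two-qubit Hilbert space ℂ² ⊗ ℂ² contains a
nonzero product vector u ⊗ v. -/
theorem two_dim_subspace_contains_nonzero_product_vector
    (V : Submodule ℂ E4) (hV : Module.finrank ℂ V = 2) :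
    ∃ u v : E2, tp u v ≠ 0 ∧ tp u v ∈ V := by
  obtain ⟨w, hwV, hw, hw0⟩ : ∃ w ∈ V, coeffDet w = 0 ∧ w ≠ 0 := by
    simpa [QuadraticMap.Anisotropic] using
      (coeffDet.comp V.subtype).not_anisotropic_of_one_lt_finrank (by omega)
  obtain ⟨u, v, huv⟩ := exists_tp_eq_of_coeffDet_eq_zero hw
  exact ⟨u, v, huv ▸ hw0, huv ▸ hwV⟩
end
end

section
/- If a two-dimensional subspace V of ℂ² ⊗ ℂ² is spanned by two linearly independent product vectors, then its orthogonal complement V⊥ is also spanned by two product vectors. Concretely, if V = span{a ⊗ b, c ⊗ d} with a ⊗ b and c ⊗ d linearly independent, then the product vectors ā ⊗ d̄ and c̄ ⊗ b̄ lie in V⊥ and span V⊥, where for a nonzero u ∈ ℂ², ū denotes a nonzero vector orthogonal to u. -/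
noncomputable section

/-! Since ⟪u ⊗ v, u' ⊗ v'⟫ = ⟪u, u'⟫ ⟪v, v'⟫, both ā ⊗ d̄ and c̄ ⊗ b̄ are orthogonal to a ⊗ b and
to c ⊗ d, and V⊥ is two-dimensional, so it suffices that ā ⊗ d̄ and c̄ ⊗ b̄ are independent.
If they were not, then c̄ ∥ ā and b̄ ∥ d̄. In ℂ² the vectors orthogonal to a nonzero vector form a
line, so c ⊥ c̄ and a ⊥ ā ∥ c̄ force c ∥ a, and likewise d ∥ b; then c ⊗ d would be a multiple
of a ⊗ b. -/

open Module Submodule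

theorem finrank_span_pair_of_linearIndependent {K V : Type*} [DivisionRing K] [AddCommGroup V]
    [Module K V] {x y : V} (h : LinearIndependent K ![x, y]) :
    finrank K (span K {x, y}) = 2 := by
  rw [← Matrix.range_cons_cons_empty x y ![], finrank_span_eq_card h, Fintype.card_fin]

theorem inner_eq_zero_of_mem_span_singleton {𝕜 E : Type*} [RCLike 𝕜]
    [NormedAddCommGroup E] [InnerProductSpace 𝕜 E] {x y z : E} (hz : z ∈ 𝕜 ∙ y)
    (hxy : inner 𝕜 x y = 0) : inner 𝕜 x z = 0 := by
  obtain ⟨μ, rfl⟩ := mem_span_singleton.mp hz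
  rw [inner_smul_right, hxy, mul_zero]

theorem EuclideanSpace.exists_apply_ne_zero {𝕜 ι : Type*} [RCLike 𝕜] {u : EuclideanSpace 𝕜 ι}
    (hu : u ≠ 0) : ∃ i, u i ≠ 0 := by
  by_contra! h
  exact hu (PiLp.ext h)

instance : Fact (finrank ℂ E2 = 2) := ⟨finrank_euclideanSpace_fin⟩

@[simp]
theorem tp_apply (u v : E2) (i j : Fin 2) : tp u v (i, j) = u i * v j := rfl

@[simp]
theorem tp_zero_left (v : E2) : tp 0 v = 0 := by
  ext; simp [tp]

@[simp]
theorem tp_zero_right (u : E2) : tp u 0 = 0 := by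
  ext; simp [tp]

theorem tp_smul_left (μ : ℂ) (u v : E2) : tp (μ • u) v = μ • tp u v := by
  ext; simp [tp, mul_assoc]

theorem tp_smul_right (μ : ℂ) (u v : E2) : tp u (μ • v) = μ • tp u v := by
  ext; simp [tp, mul_left_comm]

theorem tp_ne_zero {u v : E2} (hu : u ≠ 0) (hv : v ≠ 0) : tp u v ≠ 0 := by
  obtain ⟨i, hi⟩ := EuclideanSpace.exists_apply_ne_zero hu
  obtain ⟨j, hj⟩ := EuclideanSpace.exists_apply_ne_zero hv
  intro h
  simpa [hi, hj] using congrArg (· (i, j)) h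

theorem inner_tp (u v u' v' : E2) :
    inner ℂ (tp u v) (tp u' v') = inner ℂ u u' * inner ℂ v v' := by
  simp only [tp, PiLp.inner_apply, RCLike.inner_apply, map_mul]
  rw [Fintype.sum_prod_type, Finset.sum_mul_sum]
  exact Finset.sum_congr rfl fun i _ => Finset.sum_congr rfl fun j _ => by ring

theorem tp_mem_span_singleton_iff {u v u' v' : E2} (hu' : u' ≠ 0) (hv' : v' ≠ 0) :
    tp u' v' ∈ ℂ ∙ tp u v ↔ u' ∈ ℂ ∙ u ∧ v' ∈ ℂ ∙ v := by
  simp only [mem_span_singleton]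
  constructor
  · rintro ⟨μ, hμ⟩
    have hcoord (k l : Fin 2) : μ * (u k * v l) = u' k * v' l := by
      simpa using congrArg (· (k, l)) hμ
    obtain ⟨i, hi⟩ := EuclideanSpace.exists_apply_ne_zero hu'
    obtain ⟨j, hj⟩ := EuclideanSpace.exists_apply_ne_zero hv'
    refine ⟨⟨μ * v j / v' j, ?_⟩, ⟨μ * u i / u' i, ?_⟩⟩ <;> ext k <;>
      simp only [PiLp.smul_apply, smul_eq_mul] <;> field_simp
    · linear_combination hcoord k j
    · linear_combination hcoord i k
  · rintro ⟨⟨μ, rfl⟩, ⟨ν, rfl⟩⟩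
    exact ⟨μ * ν, by rw [tp_smul_left, tp_smul_right, smul_smul]⟩

theorem linearIndependent_tp_perp {a b c d abar bbar cbar dbar : E2}
    (habar : abar ≠ 0) (hbbar : bbar ≠ 0) (hcbar : cbar ≠ 0) (hdbar : dbar ≠ 0)
    (hoa : inner ℂ a abar = 0) (hob : inner ℂ b bbar = 0)
    (hoc : inner ℂ c cbar = 0) (hod : inner ℂ d dbar = 0)
    (hli : LinearIndependent ℂ ![tp a b, tp c d]) :
    LinearIndependent ℂ ![tp abar dbar, tp cbar bbar] := by
  have hab : tp a b ≠ 0 := hli.ne_zero 0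
  have hcd : tp c d ≠ 0 := by simpa using hli.ne_zero 1
  have ha : a ≠ 0 := by rintro rfl; simp at hab
  have hb : b ≠ 0 := by rintro rfl; simp at hab
  have hc : c ≠ 0 := by rintro rfl; simp at hcd
  have hd : d ≠ 0 := by rintro rfl; simp at hcd
  rw [LinearIndependent.pair_iff' hab] at hli
  rw [LinearIndependent.pair_iff' (tp_ne_zero habar hdbar)]
  intro μ hμ
  obtain ⟨hcbar_abar, hbbar_dbar⟩ :=
    (tp_mem_span_singleton_iff hcbar hbbar).mp (mem_span_singleton.mpr ⟨μ, hμ⟩)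
  have hca : c ∈ ℂ ∙ a := mem_span_singleton_of_inner_eq_zero_of_inner_eq_zero hcbar ha
    (inner_eq_zero_symm.mp hoc)
    (inner_eq_zero_symm.mp (inner_eq_zero_of_mem_span_singleton hcbar_abar hoa))
  have hdb : d ∈ ℂ ∙ b := mem_span_singleton_of_inner_eq_zero_of_inner_eq_zero hbbar hb
    (inner_eq_zero_symm.mp (inner_eq_zero_of_mem_span_singleton hbbar_dbar hod))
    (inner_eq_zero_symm.mp hob)
  obtain ⟨ν, hν⟩ := mem_span_singleton.mp ((tp_mem_span_singleton_iff hc hd).mpr ⟨hca, hdb⟩)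
  exact hli ν hν

/-- If V = span{a ⊗ b, c ⊗ d} with a ⊗ b and c ⊗ d linearly independent, and ā, b̄, c̄, d̄
are nonzero vectors orthogonal to a, b, c, d respectively, then the product vectors
ā ⊗ d̄ and c̄ ⊗ b̄ lie in V⊥ and span V⊥. -/
theorem orthocomplement_spanned_by_product_vectors
    (a b c d abar bbar cbar dbar : E2)
    (habar : abar ≠ 0) (hbbar : bbar ≠ 0) (hcbar : cbar ≠ 0) (hdbar : dbar ≠ 0)
    (hoa : (inner ℂ a abar : ℂ) = 0) (hob : (inner ℂ b bbar : ℂ) = 0)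
    (hoc : (inner ℂ c cbar : ℂ) = 0) (hod : (inner ℂ d dbar : ℂ) = 0)
    (hli : LinearIndependent ℂ ![tp a b, tp c d])
    (V : Submodule ℂ E4) (hV : V = Submodule.span ℂ {tp a b, tp c d}) :
    tp abar dbar ∈ Vᗮ ∧ tp cbar bbar ∈ Vᗮ ∧
      Vᗮ = Submodule.span ℂ {tp abar dbar, tp cbar bbar} := by
  have hperp : span ℂ {tp abar dbar, tp cbar bbar} ≤ Vᗮ := by
    refine isOrtho_iff_le.mp (IsOrtho.symm ?_)
    rw [hV, isOrtho_span]
    simp only [Set.mem_insert_iff, Set.mem_singleton_iff]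
    rintro _ (rfl | rfl) _ (rfl | rfl) <;> simp [inner_tp, hoa, hob, hoc, hod]
  have hdimV : finrank ℂ V + 2 = finrank ℂ E4 := by
    rw [hV, finrank_span_pair_of_linearIndependent hli]
    simp
  refine ⟨hperp (subset_span (by simp)), hperp (subset_span (by simp)),
    (eq_of_le_of_finrank_eq hperp ?_).symm⟩
  rw [finrank_add_finrank_orthogonal' hdimV, finrank_span_pair_of_linearIndependent
    (linearIndependent_tp_perp habar hbbar hcbar hdbar hoa hob hoc hod hli)]
end
end

section
/- Let V be a two-dimensional subspace of ℂ² ⊗ ℂ² whose orthogonal complement V⊥ contains exactly one product line, spanned by the unit vector τ. Then: (i) every orthogonal projector M on ℂ² ⊗ ℂ² satisfying Mv = v for all v ∈ V and whose kernel is spanned by product vectors has ker M ⊆ ℂτ; (ii) consequently, for any convex combination Ω = Σᵢ μᵢ Mᵢ of such projectors, the unit vector τ' ∈ V⊥ orthogonal to τ satisfies Ωτ' = τ', so the spectral gap ν(Ω) := 1 − λ_max((I − Π_V)Ω(I − Π_V)) equals 0. -/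
/-!
A projector fixing `V` pointwise has its kernel in `Vᗮ`. If that kernel is spanned by product
vectors, each of them spans a product line of `Vᗮ`, so it lies on the only one, `ℂτ`. Hence every
such projector fixes `τ' ⊥ τ`, and so does every convex combination `Ω`. The compression of `Ω`
to `Vᗮ` is a product of contractions, so none of its eigenvalues exceeds `1`, while `τ'` is an
eigenvector for `1`.
-/

noncomputable section

/-- The set of product lines in a subspace W: one-dimensional subspaces of W spanned by a
nonzero simple tensor u ⊗ v. -/
def productLines (W : Submodule ℂ E4) : Set (Submodule ℂ E4) :=
  {L | ∃ u v : E2, tp u v ≠ 0 ∧ L = Submodule.span ℂ {tp u v} ∧ L ≤ W}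


section Normed

variable {𝕜 F : Type*} [RCLike 𝕜] [SeminormedAddCommGroup F] [NormedSpace 𝕜 F]

theorem norm_sum_ofReal_smul_le_one {ι : Type*} (s : Finset ι) {μ : ι → ℝ}
    (hμ0 : ∀ i ∈ s, 0 ≤ μ i) (hμ : ∑ i ∈ s, μ i = 1) {x : ι → F} (hx : ∀ i ∈ s, ‖x i‖ ≤ 1) :
    ‖∑ i ∈ s, (μ i : 𝕜) • x i‖ ≤ 1 :=
  calc ‖∑ i ∈ s, (μ i : 𝕜) • x i‖ ≤ ∑ i ∈ s, μ i * ‖x i‖ := by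
        refine (norm_sum_le _ _).trans_eq (Finset.sum_congr rfl fun i hi => ?_)
        rw [norm_smul, RCLike.norm_ofReal, abs_of_nonneg (hμ0 i hi)]
    _ ≤ ∑ i ∈ s, μ i := Finset.sum_le_sum fun i hi => mul_le_of_le_one_right (hμ0 i hi) (hx i hi)
    _ = 1 := hμ

theorem sum_ofReal_smul_apply_eq_self {ι : Type*} (s : Finset ι) {μ : ι → ℝ}
    (hμ : ∑ i ∈ s, μ i = 1) {M : ι → F →L[𝕜] F} {x : F} (hx : ∀ i ∈ s, M i x = x) :
    (∑ i ∈ s, (μ i : 𝕜) • M i) x = x := by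
  simp only [sum_apply, smul_apply]
  rw [Finset.sum_congr rfl fun i hi => by rw [hx i hi], ← Finset.sum_smul, ← RCLike.ofReal_sum,
    hμ, RCLike.ofReal_one, one_smul]

theorem norm_le_one_of_apply_eq_smul {T : F →L[𝕜] F} (hT : ‖T‖ ≤ 1) {w : F} (hw : ‖w‖ ≠ 0)
    {c : 𝕜} (hc : T w = c • w) : ‖c‖ ≤ 1 := by
  refine le_of_mul_le_mul_right ?_ ((norm_nonneg w).lt_of_ne' hw)
  calc ‖c‖ * ‖w‖ = ‖T w‖ := by rw [hc, norm_smul]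
    _ ≤ ‖T‖ * ‖w‖ := T.le_opNorm w
    _ ≤ 1 * ‖w‖ := by gcongr

end Normed

section InnerProduct

variable {𝕜 E : Type*} [RCLike 𝕜] [NormedAddCommGroup E] [InnerProductSpace 𝕜 E] [CompleteSpace E]

theorem ker_le_orthogonal_of_forall_apply_eq_self {M : E →L[𝕜] E} (hM : IsSelfAdjoint M)
    {V : Submodule 𝕜 E} (hV : ∀ v ∈ V, M v = v) : LinearMap.ker (M : E →ₗ[𝕜] E) ≤ Vᗮ := by
  intro w hw
  rw [Submodule.mem_orthogonal]
  intro v hv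
  rw [← hV v hv, ← ContinuousLinearMap.adjoint_inner_right, ← ContinuousLinearMap.star_eq_adjoint,
    hM.star_eq, show M w = 0 from hw, inner_zero_right]

theorem IsStarProjection.apply_eq_self_of_mem_orthogonal_ker {M : E →L[𝕜] E}
    (hM : IsStarProjection M) {x : E} (hx : x ∈ (LinearMap.ker (M : E →ₗ[𝕜] E))ᗮ) : M x = x := by
  obtain ⟨K, _, rfl⟩ := isStarProjection_iff_eq_starProjection.mp hM
  rwa [Submodule.starProjection_eq_self_iff, ← K.orthogonal_orthogonal, ← K.ker_starProjection]

theorem isGreatest_eigenvalues_compression {Q Ω : E →L[𝕜] E} (hQ : IsStarProjection Q)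
    (hΩ : ‖Ω‖ ≤ 1) {x : E} (hx : x ≠ 0) (hQx : Q x = x) (hΩx : Ω x = x) :
    IsGreatest {r : ℝ | ∃ w : E, w ≠ 0 ∧ Q (Ω (Q w)) = (r : 𝕜) • w} 1 := by
  refine ⟨⟨x, hx, by rw [hQx, hΩx, hQx, RCLike.ofReal_one, one_smul]⟩, ?_⟩
  rintro r ⟨w, hw, hr⟩
  have hQ1 := hQ.norm_le
  have hT : ‖Q ∘L Ω ∘L Q‖ ≤ 1 :=
    calc ‖Q ∘L Ω ∘L Q‖ ≤ ‖Q‖ * (‖Ω‖ * ‖Q‖) :=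
          (Q.opNorm_comp_le _).trans (by gcongr; exact Ω.opNorm_comp_le Q)
      _ ≤ 1 := mul_le_one₀ hQ1 (by positivity) (mul_le_one₀ hΩ (norm_nonneg Q) hQ1)
  have hr1 := norm_le_one_of_apply_eq_smul hT (norm_ne_zero_iff.mpr hw) hr
  rw [RCLike.norm_ofReal] at hr1
  exact (le_abs_self r).trans hr1

end InnerProduct

theorem tp_mem_of_productLines_eq_singleton {W L : Submodule ℂ E4} (hW : productLines W = {L})
    {u v : E2} (huv : tp u v ∈ W) : tp u v ∈ L := by
  by_cases h0 : tp u v = 0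
  · rw [h0]; exact L.zero_mem
  · have hline : Submodule.span ℂ {tp u v} ∈ productLines W :=
      ⟨u, v, h0, rfl, (Submodule.span_singleton_le_iff_mem _ _).mpr huv⟩
    rw [hW, Set.mem_singleton_iff] at hline
    exact hline ▸ Submodule.mem_span_singleton_self _

theorem ker_le_of_productLines_orthogonal_eq_singleton {V L : Submodule ℂ E4}
    (hV : productLines Vᗮ = {L}) {M : E4 →L[ℂ] E4} (hM : IsSelfAdjoint M)
    (hfix : ∀ v ∈ V, M v = v) {S : Set E4} (hS : ∀ w ∈ S, ∃ u v : E2, w = tp u v)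
    (hMS : LinearMap.ker (M : E4 →ₗ[ℂ] E4) = Submodule.span ℂ S) :
    LinearMap.ker (M : E4 →ₗ[ℂ] E4) ≤ L := by
  rw [hMS, Submodule.span_le]
  intro w hw
  obtain ⟨u, v, rfl⟩ := hS w hw
  exact tp_mem_of_productLines_eq_singleton hV
    (ker_le_orthogonal_of_forall_apply_eq_self hM hfix (hMS ▸ Submodule.subset_span hw))

theorem unverifiable_subspace_no_LOCC_projective_strategy_general
    (V : Submodule ℂ E4) (τ : E4)
    (huniq : productLines Vᗮ = {Submodule.span ℂ {τ}}) :
    (∀ M : E4 →L[ℂ] E4, IsSelfAdjoint M → M.comp M = M → (∀ v ∈ V, M v = v) →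
      (∃ S : Set E4, (∀ w ∈ S, ∃ u v : E2, w = tp u v) ∧
        LinearMap.ker (M : E4 →ₗ[ℂ] E4) = Submodule.span ℂ S) →
      LinearMap.ker (M : E4 →ₗ[ℂ] E4) ≤ Submodule.span ℂ {τ}) ∧
    (∀ (n : ℕ) (μ : Fin n → ℝ) (M : Fin n → (E4 →L[ℂ] E4)),
      (∀ i, 0 ≤ μ i) → (∑ i, μ i) = 1 →
      (∀ i, IsSelfAdjoint (M i) ∧ (M i).comp (M i) = M i ∧ (∀ v ∈ V, M i v = v) ∧
        ∃ S : Set E4, (∀ w ∈ S, ∃ u v : E2, w = tp u v) ∧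
          LinearMap.ker (M i : E4 →ₗ[ℂ] E4) = Submodule.span ℂ S) →
      ∀ Ω : E4 →L[ℂ] E4, Ω = ∑ i, (μ i : ℂ) • M i →
      ∀ P : E4 →ₗ[ℂ] E4, (∀ w, P w = (V.orthogonalProjectionOnto w : E4)) →
      ∀ τ' : E4, τ' ∈ Vᗮ → ‖τ'‖ = 1 → (inner ℂ τ τ' : ℂ) = 0 →
        Ω τ' = τ' ∧
        IsGreatest {r : ℝ | ∃ w : E4, w ≠ 0 ∧
          Ω (w - P w) - P (Ω (w - P w)) = (r : ℂ) • w} 1) := by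
  refine ⟨fun M hM _ hfix ⟨S, hS, hMS⟩ =>
    ker_le_of_productLines_orthogonal_eq_singleton huniq hM hfix hS hMS, ?_⟩
  intro n μ M hμ0 hμ hM Ω hΩ P hP τ' hτ'V hτ'1 hττ'
  have hproj (i : Fin n) : IsStarProjection (M i) := ⟨(hM i).2.1, (hM i).1⟩
  have hMτ' (i : Fin n) : M i τ' = τ' := by
    obtain ⟨hsa, -, hfix, S, hS, hMS⟩ := hM i
    have hker := ker_le_of_productLines_orthogonal_eq_singleton huniq hsa hfix hS hMS
    exact (hproj i).apply_eq_self_of_mem_orthogonal_ker (Submodule.orthogonal_le hker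
      (Submodule.mem_orthogonal_singleton_iff_inner_right.mpr hττ'))
  have hΩτ' : Ω τ' = τ' := hΩ ▸ sum_ofReal_smul_apply_eq_self _ hμ fun i _ => hMτ' i
  have hΩ1 : ‖Ω‖ ≤ 1 := hΩ ▸ norm_sum_ofReal_smul_le_one _ (fun i _ => hμ0 i) hμ
    fun i _ => (hproj i).norm_le
  have hPQ (w : E4) : w - P w = Vᗮ.starProjection w := by
    rw [hP, Submodule.starProjection_orthogonal_val, Submodule.starProjection_apply]
  refine ⟨hΩτ', ?_⟩
  simp_rw [hPQ]
  refine isGreatest_eigenvalues_compression isStarProjection_starProjection hΩ1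
    (ne_zero_of_norm_ne_zero (hτ'1 ▸ one_ne_zero)) ?_ hΩτ'
  exact Submodule.starProjection_eq_self_iff.mpr hτ'V

/-- Let V be a two-dimensional subspace of ℂ² ⊗ ℂ² whose orthogonal complement contains
exactly one product line, spanned by the unit (product) vector τ.  (i) Every orthogonal
projector M fixing V pointwise whose kernel is spanned by product vectors has
ker M ⊆ ℂτ.  (ii) For any convex combination Ω = Σᵢ μᵢ Mᵢ of such projectors, the unit
vector τ'"'"' ∈ V⊥ orthogonal to τ satisfies Ω τ'"'"' = τ'"'"', so the spectral gap
ν(Ω) = 1 − λ_max((I−Π)Ω(I−Π)) equals 0, i.e. λ_max((I−Π)Ω(I−Π)) = 1. -/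
theorem unverifiable_subspace_no_LOCC_projective_strategy
    (V : Submodule ℂ E4) (hdim : Module.finrank ℂ V = 2)
    (τ : E4) (hτnorm : ‖τ‖ = 1) (hτprod : ∃ u v : E2, τ = tp u v) (hτmem : τ ∈ Vᗮ)
    (huniq : productLines Vᗮ = {Submodule.span ℂ {τ}}) :
    (∀ M : E4 →L[ℂ] E4, IsSelfAdjoint M → M.comp M = M → (∀ v ∈ V, M v = v) →
      (∃ S : Set E4, (∀ w ∈ S, ∃ u v : E2, w = tp u v) ∧
        LinearMap.ker (M : E4 →ₗ[ℂ] E4) = Submodule.span ℂ S) →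
      LinearMap.ker (M : E4 →ₗ[ℂ] E4) ≤ Submodule.span ℂ {τ}) ∧
    (∀ (n : ℕ) (μ : Fin n → ℝ) (M : Fin n → (E4 →L[ℂ] E4)),
      (∀ i, 0 ≤ μ i) → (∑ i, μ i) = 1 →
      (∀ i, IsSelfAdjoint (M i) ∧ (M i).comp (M i) = M i ∧ (∀ v ∈ V, M i v = v) ∧
        ∃ S : Set E4, (∀ w ∈ S, ∃ u v : E2, w = tp u v) ∧
          LinearMap.ker (M i : E4 →ₗ[ℂ] E4) = Submodule.span ℂ S) →
      ∀ Ω : E4 →L[ℂ] E4, Ω = ∑ i, (μ i : ℂ) • M i →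
      ∀ P : E4 →ₗ[ℂ] E4, (∀ w, P w = (V.orthogonalProjectionOnto w : E4)) →
      ∀ τ' : E4, τ' ∈ Vᗮ → ‖τ'‖ = 1 → (inner ℂ τ τ' : ℂ) = 0 →
        Ω τ' = τ' ∧
        IsGreatest {r : ℝ | ∃ w : E4, w ≠ 0 ∧
          Ω (w - P w) - P (Ω (w - P w)) = (r : ℂ) • w} 1) :=
  unverifiable_subspace_no_LOCC_projective_strategy_general V τ huniq
end
end
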